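/- For the weakly asymmetric random walk with parameter c > 0, for 0 < α, β < 1 with α ≠ β, setting x_N = ⌊αN⌋ and y_N = ⌊βN⌋, the conditional probability that y_N is visited an odd number of times before exit, given that y_N is visited before exit, converges to 1/2: lim_{N→∞} P_{x_N}(G(y_N) ≡ 1 mod 2 | T_{y_N} < τ_N) = 1/2. -/

import Mathlib

/-!
Each visit to `y` is followed by another one before the exit time with probability
`r = P_y(T_y < τ_N)`, so given `T_y < τ_N` the local time `G(y)` is geometric and is odd with
probability `1 / (1 + r)`. Concretely, first-step analysis makes `z ↦ P_z(G(y) odd)` and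
`z ↦ P_z(G(y) ≥ 1)` harmonic away from `y`, with the same zeros at `0` and `N`, so their ratio
is the constant `P_y(G(y) odd) = 1 / (1 + r)`.

Harmonic functions are affine in the scale function `s(z) = ∑_{j<z} ρ^j`, `ρ = q/p`, which gives
`1 - r ≤ (p/q)^N (1/y + 1/(N - y))`. For `p = 1/2 + c/N` the factor `(p/q)^N` stays bounded while
`y` and `N - y` grow linearly, so `r → 1` and the conditional probability tends to `1/2`.
-/

open Filter Topology

/-- Position of the nearest-neighbor walk after the steps `w` (`true` = one step right,
`false` = one step left), started from `x`. -/
def walkPos (x : ℤ) (w : List Bool) : ℤ :=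
  x + (w.count true : ℤ) - (w.count false : ℤ)

/-- `w` is the step sequence of a trajectory on `{0, 1, …, N}` started at `x` and run
exactly until the exit time `τ_N = T_0 ∧ T_N`: all positions strictly before the last
step lie strictly inside `(0, N)`, and the final position is `0` or `N`. -/
def IsExitPath (N : ℕ) (x : ℤ) (w : List Bool) : Prop :=
  (∀ k < w.length, 0 < walkPos x (w.take k) ∧ walkPos x (w.take k) < (N : ℤ)) ∧
    (walkPos x w = 0 ∨ walkPos x w = (N : ℤ))

/-- Probability weight of the step sequence `w` when each step goes right with
probability `p` and left with probability `1 - p`, independently. -/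
noncomputable def wt (p : ℝ) (w : List Bool) : ℝ :=
  p ^ w.count true * (1 - p) ^ w.count false

/-- `prob N p x S` is the probability, for the walk on `{0, …, N}` with right-step
probability `p` started at `x` and stopped at the exit time `τ_N`, that its stopped
trajectory (recorded as the step sequence up to time `τ_N`) satisfies `S`. -/
noncomputable def prob (N : ℕ) (p : ℝ) (x : ℤ) (S : List Bool → Prop) : ℝ :=
  ∑' w : List Bool, Set.indicator {w | IsExitPath N x w ∧ S w} (wt p) w

/-- Expectation of `f` of the stopped trajectory for the walk started at `x`. -/
noncomputable def expect (N : ℕ) (p : ℝ) (x : ℤ) (f : List Bool → ℝ) : ℝ :=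
  ∑' w : List Bool, Set.indicator {w | IsExitPath N x w} (fun w => wt p w * f w) w

/-- Probability for the walk whose starting point is uniformly distributed on
`{0, 1, …, N}`; the event `S` may depend on the starting point. -/
noncomputable def probUniform (N : ℕ) (p : ℝ) (S : ℤ → List Bool → Prop) : ℝ :=
  (∑ x ∈ Finset.range (N + 1), prob N p (x : ℤ) (S (x : ℤ))) / (N + 1)

/-- The set of sites visited by the stopped walk up to time `τ_N` (time `0` included). -/
def rangeSet (x : ℤ) (w : List Bool) : Finset ℤ :=
  (Finset.range (w.length + 1)).image fun k => walkPos x (w.take k)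

/-- The range `R_N`: the number of distinct sites visited up to the exit time. -/
def rangeCount (x : ℤ) (w : List Bool) : ℕ := (rangeSet x w).card

/-- The local time `G(y) = Σ_{k=0}^{τ_N} 1_{X_k = y}` of the stopped trajectory `w`. -/
def localTime (x y : ℤ) (w : List Bool) : ℕ :=
  ((Finset.range (w.length + 1)).filter fun k => walkPos x (w.take k) = y).card

/-- The event `T_y < τ_N`: the walk started at `x` visits `y` at some time
`k ≥ 1` strictly before the end of the stopped trajectory `w`. -/
def hitsBefore (x y : ℤ) (w : List Bool) : Prop :=
  ∃ k, 1 ≤ k ∧ k < w.length ∧ walkPos x (w.take k) = y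

def IsHarmonicOn (p : ℝ) (f : ℤ → ℝ) (a b : ℤ) : Prop :=
  ∀ z, a < z → z < b → f z = p * f (z + 1) + (1 - p) * f (z - 1)

/-- The scale function of the walk when `ρ = (1 - p) / p`; it vanishes for `z ≤ 0`. -/
def scale (ρ : ℝ) (z : ℤ) : ℝ := ∑ j ∈ Finset.range z.toNat, ρ ^ j

section Harmonic

variable {p : ℝ} {f g : ℤ → ℝ} {a b : ℤ}

lemma isHarmonicOn_const (c : ℝ) : IsHarmonicOn p (fun _ => c) a b :=
  fun _ _ _ => by ring

lemma IsHarmonicOn.sub (hf : IsHarmonicOn p f a b) (hg : IsHarmonicOn p g a b) :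
    IsHarmonicOn p (fun z => f z - g z) a b :=
  fun z h₁ h₂ => by linear_combination hf z h₁ h₂ - hg z h₁ h₂

lemma IsHarmonicOn.const_mul (c : ℝ) (hf : IsHarmonicOn p f a b) :
    IsHarmonicOn p (fun z => c * f z) a b :=
  fun z h₁ h₂ => by linear_combination c * hf z h₁ h₂

lemma scale_zero (ρ : ℝ) : scale ρ 0 = 0 := by simp [scale]

lemma scale_add_one (ρ : ℝ) {z : ℤ} (hz : 0 ≤ z) :
    scale ρ (z + 1) = scale ρ z + ρ ^ z.toNat := by
  rw [scale, scale, show (z + 1).toNat = z.toNat + 1 by omega, Finset.sum_range_succ]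

lemma scale_sub_scale {ρ : ℝ} {z w : ℤ} (hzw : z ≤ w) :
    scale ρ w - scale ρ z = ∑ j ∈ Finset.Ico z.toNat w.toNat, ρ ^ j :=
  (Finset.sum_Ico_eq_sub _ (by omega)).symm

lemma scale_lt_scale {ρ : ℝ} (hρ : 0 < ρ) {z w : ℤ} (hz : 0 ≤ z) (hzw : z < w) :
    scale ρ z < scale ρ w := by
  rw [← sub_pos, scale_sub_scale hzw.le]
  exact Finset.sum_pos (fun j _ => pow_pos hρ j) ⟨z.toNat, by simp; omega⟩

lemma mul_pow_le_scale_sub_scale {ρ : ℝ} (hρ0 : 0 ≤ ρ) (hρ1 : ρ ≤ 1) {z w : ℤ}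
    (hz : 0 ≤ z) (hzw : z ≤ w) :
    ((w - z : ℤ) : ℝ) * ρ ^ w.toNat ≤ scale ρ w - scale ρ z := by
  have h := Finset.card_nsmul_le_sum (Finset.Ico z.toNat w.toNat) (ρ ^ ·) (ρ ^ w.toNat)
    fun j hj => pow_le_pow_of_le_one hρ0 hρ1 (Finset.mem_Ico.mp hj).2.le
  rw [nsmul_eq_mul, Nat.card_Ico] at h
  rw [scale_sub_scale hzw]
  refine le_of_eq_of_le ?_ h
  rw [Nat.cast_sub (by omega)]
  congr 1
  exact_mod_cast (by omega : w - z = (w.toNat : ℤ) - z.toNat)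

lemma one_div_scale_sub_scale_le {ρ : ℝ} (hρ0 : 0 < ρ) (hρ1 : ρ ≤ 1) {z w : ℤ} {n : ℕ}
    (hz : 0 ≤ z) (hzw : z < w) (hwn : w ≤ n) :
    1 / (scale ρ w - scale ρ z) ≤ ρ⁻¹ ^ n / (w - z) := by
  have hwz : (0 : ℝ) < w - z := sub_pos.mpr (Int.cast_lt.mpr hzw)
  calc 1 / (scale ρ w - scale ρ z) ≤ 1 / ((w - z) * ρ ^ n) := by
        refine one_div_le_one_div_of_le (by positivity) ?_
        refine le_trans ?_ (mul_pow_le_scale_sub_scale hρ0.le hρ1 hz hzw.le)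
        push_cast
        exact mul_le_mul_of_nonneg_left (pow_le_pow_of_le_one hρ0.le hρ1 (by omega)) hwz.le
    _ = ρ⁻¹ ^ n / (w - z) := by rw [inv_pow, one_div, mul_inv, div_eq_inv_mul]

lemma isHarmonicOn_scale (hp0 : 0 < p) {c : ℤ} (hca : c ≤ a) :
    IsHarmonicOn p (fun z => scale ((1 - p) / p) (z - c)) a b := by
  intro z hz _
  dsimp only
  obtain ⟨k, hk⟩ : ∃ k : ℕ, z - c = k + 1 := ⟨(z - c - 1).toNat, by omega⟩
  rw [show z + 1 - c = (k + 1 : ℤ) + 1 by omega, show z - 1 - c = (k : ℤ) by omega, hk,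
    scale_add_one _ (show (0 : ℤ) ≤ k + 1 by omega),
    scale_add_one _ (show (0 : ℤ) ≤ k by omega)]
  simp only [Int.toNat_natCast, show ((k : ℤ) + 1).toNat = k + 1 by omega, pow_succ]
  have hρ : p * ((1 - p) / p) = 1 - p := mul_div_cancel₀ _ hp0.ne'
  linear_combination (-((1 - p) / p) ^ k) * hρ

lemma IsHarmonicOn.eqOn_of_eq_of_eq_add_one (hp : p ≠ 0) (hf : IsHarmonicOn p f a b)
    (hg : IsHarmonicOn p g a b) (ha : f a = g a) (ha' : f (a + 1) = g (a + 1)) :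
    Set.EqOn f g (Set.Icc a b) := by
  have key : ∀ k : ℕ, a + k ≤ b → f (a + k) = g (a + k) := by
    intro k
    induction k using Nat.twoStepInduction with
    | zero => exact fun _ => by simpa using ha
    | one => exact fun _ => by simpa using ha'
    | more n ih₀ ih₁ =>
      intro hn
      have hprev : a + (n + 1 : ℕ) - 1 = a + n := by push_cast; ring
      have hnext : a + (n + 1 : ℕ) + 1 = a + (n + 2 : ℕ) := by push_cast; ring
      have hf' := hf (a + (n + 1 : ℕ)) (by omega) (by omega)
      have hg' := hg (a + (n + 1 : ℕ)) (by omega) (by omega)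
      rw [hprev, hnext, ih₁ (by omega), ih₀ (by omega)] at hf'
      rw [hprev, hnext] at hg'
      exact mul_left_cancel₀ hp (by linarith)
  rintro z ⟨hz₁, hz₂⟩
  have h := key (z - a).toNat (by omega)
  rwa [show a + ((z - a).toNat : ℤ) = z by omega] at h

/-- `f - g` is a multiple of the scale function started at `a`, and that multiple must vanish
at `b`. -/
lemma IsHarmonicOn.eqOn_of_eq_of_eq (hp0 : 0 < p) (hp1 : p < 1) (hf : IsHarmonicOn p f a b)
    (hg : IsHarmonicOn p g a b) (ha : f a = g a) (hb : f b = g b) :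
    Set.EqOn f g (Set.Icc a b) := by
  set d := f (a + 1) - g (a + 1)
  have hscale : Set.EqOn (fun z => f z - g z) (fun z => d * scale ((1 - p) / p) (z - a))
      (Set.Icc a b) :=
    (hf.sub hg).eqOn_of_eq_of_eq_add_one hp0.ne' ((isHarmonicOn_scale hp0 le_rfl).const_mul d)
      (by simp [ha, scale_zero]) (by simp [scale, d])
  rintro z hz
  rcases eq_or_lt_of_le hz.1 with rfl | haz
  · exact ha
  have hρ : 0 < (1 - p) / p := div_pos (by linarith) hp0
  have hd : d = 0 := by
    have hb' := hscale ⟨haz.le.trans hz.2, le_rfl⟩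
    have hpos := scale_lt_scale hρ le_rfl (show (0 : ℤ) < b - a by linarith [hz.2])
    simp only [hb, sub_self, scale_zero] at hb' hpos
    exact (mul_eq_zero.mp hb'.symm).resolve_right hpos.ne'
  simpa [hd, sub_eq_zero] using hscale hz

end Harmonic

section PathSpace

open ENNReal

variable {N : ℕ} {p : ℝ} {x : ℤ} {S : List Bool → Prop}

@[simp] lemma walkPos_nil (x : ℤ) : walkPos x [] = x := by simp [walkPos]

lemma walkPos_cons (x : ℤ) (b : Bool) (w : List Bool) :
    walkPos x (b :: w) = walkPos (x + if b then 1 else -1) w := by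
  cases b <;> simp [walkPos] <;> ring

lemma isExitPath_nil : IsExitPath N x [] ↔ x = 0 ∨ x = N := by
  simp [IsExitPath]

lemma isExitPath_cons {b : Bool} {w : List Bool} :
    IsExitPath N x (b :: w) ↔ (0 < x ∧ x < N) ∧ IsExitPath N (x + if b then 1 else -1) w := by
  constructor
  · rintro ⟨hpos, hend⟩
    refine ⟨by simpa using hpos 0 (by simp), fun k hk => ?_, by simpa [walkPos_cons] using hend⟩
    simpa [walkPos_cons] using hpos (k + 1) (by simpa using hk)
  · rintro ⟨hx, hpos, hend⟩
    refine ⟨fun k hk => ?_, by simpa [walkPos_cons] using hend⟩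
    cases k with
    | zero => simpa using hx
    | succ k => simpa [walkPos_cons] using hpos k (by simpa using hk)

/-- `wt` in `ℝ≥0∞`, where sums over all step sequences need no summability side conditions. -/
noncomputable def ewt (p : ℝ) (w : List Bool) : ℝ≥0∞ :=
  ENNReal.ofReal p ^ w.count true * ENNReal.ofReal (1 - p) ^ w.count false

@[simp] lemma ewt_nil (p : ℝ) : ewt p [] = 1 := by simp [ewt]

lemma ewt_ne_top (p : ℝ) (w : List Bool) : ewt p w ≠ ⊤ :=
  mul_ne_top (pow_ne_top ofReal_ne_top) (pow_ne_top ofReal_ne_top)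

lemma ewt_cons (p : ℝ) (b : Bool) (w : List Bool) :
    ewt p (b :: w) = (if b then ENNReal.ofReal p else ENNReal.ofReal (1 - p)) * ewt p w := by
  cases b <;> simp [ewt, pow_succ] <;> ring

noncomputable def eprob (N : ℕ) (p : ℝ) (x : ℤ) (S : List Bool → Prop) : ℝ≥0∞ :=
  ∑' w : List Bool, Set.indicator {w | IsExitPath N x w ∧ S w} (ewt p) w

lemma eprob_of_not_interior (hx : ¬ (0 < x ∧ x < N)) :
    eprob N p x S = Set.indicator {w | IsExitPath N x w ∧ S w} (ewt p) [] := by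
  refine tsum_eq_single [] fun w hw => Set.indicator_of_notMem ?_ _
  obtain ⟨b, w, rfl⟩ := List.exists_cons_of_ne_nil hw
  exact fun h => hx (isExitPath_cons.mp h.1).1

lemma tsum_list_bool_eq_tsum_cons_add {f : List Bool → ℝ≥0∞} (h : f [] = 0) :
    ∑' w, f w = ∑' w, f (true :: w) + ∑' w, f (false :: w) := by
  have hinj : Function.Injective fun bw : Bool × List Bool => bw.1 :: bw.2 :=
    fun _ _ h => Prod.ext (List.cons.inj h).1 (List.cons.inj h).2
  rw [← hinj.tsum_eq, ENNReal.tsum_prod', tsum_bool, add_comm]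
  intro w hw
  cases w with
  | nil => exact absurd h hw
  | cons b w => exact ⟨(b, w), rfl⟩

lemma eprob_first_step (hx : 0 < x ∧ x < N) :
    eprob N p x S = ENNReal.ofReal p * eprob N p (x + 1) (fun w => S (true :: w))
      + ENNReal.ofReal (1 - p) * eprob N p (x - 1) (fun w => S (false :: w)) := by
  have hstep : ∀ b w, Set.indicator {w | IsExitPath N x w ∧ S w} (ewt p) (b :: w) =
      (if b then ENNReal.ofReal p else ENNReal.ofReal (1 - p)) *
        Set.indicator {w | IsExitPath N (x + if b then 1 else -1) w ∧ S (b :: w)} (ewt p) w := by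
    intro b w
    classical
    simp only [Set.indicator_apply, Set.mem_ofPred_eq, isExitPath_cons, hx, true_and, ewt_cons]
    split_ifs <;> simp
  rw [eprob, tsum_list_bool_eq_tsum_cons_add
    (Set.indicator_of_notMem (by simp [isExitPath_nil]; omega) _)]
  simp only [hstep, ENNReal.tsum_mul_left, eprob, if_true, Bool.false_eq_true, if_false,
    ← sub_eq_add_neg]

lemma eprob_length_lt_le_one (hp0 : 0 ≤ p) (hp1 : p ≤ 1) (n : ℕ) :
    ∀ (x : ℤ) (S : List Bool → Prop), eprob N p x (fun w => w.length < n ∧ S w) ≤ 1 := by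
  induction n with
  | zero => simp [eprob]
  | succ n ih =>
    intro x S
    by_cases hx : 0 < x ∧ x < N
    · rw [eprob_first_step hx]
      simp only [List.length_cons, add_lt_add_iff_right]
      calc _ ≤ ENNReal.ofReal p * 1 + ENNReal.ofReal (1 - p) * 1 := by gcongr <;> exact ih _ _
        _ = 1 := by rw [mul_one, mul_one, ← ENNReal.ofReal_add hp0 (by linarith)]; simp
    · rw [eprob_of_not_interior hx]
      exact (Set.indicator_le_self' (fun _ _ => zero_le) []).trans (by simp)

lemma eprob_le_one (hp0 : 0 ≤ p) (hp1 : p ≤ 1) : eprob N p x S ≤ 1 := by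
  rw [eprob, ENNReal.tsum_eq_iSup_sum]
  refine iSup_le fun F => ?_
  set n := F.sup List.length + 1
  calc ∑ w ∈ F, Set.indicator {w | IsExitPath N x w ∧ S w} (ewt p) w
      = ∑ w ∈ F, Set.indicator {w | IsExitPath N x w ∧ w.length < n ∧ S w} (ewt p) w := by
        refine Finset.sum_congr rfl fun w hw => ?_
        have : w.length < n := Nat.lt_succ_of_le (Finset.le_sup hw)
        classical
        simp only [Set.indicator_apply, Set.mem_ofPred_eq, this, true_and]
    _ ≤ eprob N p x (fun w => w.length < n ∧ S w) := ENNReal.sum_le_tsum _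
    _ ≤ 1 := eprob_length_lt_le_one hp0 hp1 n x S

lemma eprob_ne_top (hp0 : 0 ≤ p) (hp1 : p ≤ 1) : eprob N p x S ≠ ⊤ :=
  ne_top_of_le_ne_top one_ne_top (eprob_le_one hp0 hp1)

lemma eprob_add_eprob_not :
    eprob N p x S + eprob N p x (fun w => ¬ S w) = eprob N p x (fun _ => True) := by
  rw [eprob, eprob, eprob, ← ENNReal.tsum_add]
  congr 1 with w
  by_cases hE : IsExitPath N x w <;> by_cases hS : S w <;> simp [hE, hS]

lemma prob_eq_toReal (hp0 : 0 ≤ p) (hp1 : p ≤ 1) : prob N p x S = (eprob N p x S).toReal := by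
  have hfin : ∀ w, Set.indicator {w | IsExitPath N x w ∧ S w} (ewt p) w ≠ ⊤ := fun w => by
    by_cases h : IsExitPath N x w ∧ S w <;> simp [h, ewt_ne_top]
  rw [eprob, ENNReal.tsum_toReal_eq hfin, prob]
  congr 1 with w
  by_cases h : IsExitPath N x w ∧ S w
  · simp [h, ewt, wt, ENNReal.toReal_ofReal hp0,
      ENNReal.toReal_ofReal (sub_nonneg.mpr hp1)]
  · simp [h]

end PathSpace

section Prob

variable {N : ℕ} {p : ℝ} {x : ℤ} {S T : List Bool → Prop}

lemma prob_congr (h : ∀ w, IsExitPath N x w → (S w ↔ T w)) : prob N p x S = prob N p x T := by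
  have hset : {w | IsExitPath N x w ∧ S w} = {w | IsExitPath N x w ∧ T w} :=
    Set.ext fun w => and_congr_right (h w)
  rw [prob, prob, hset]

section

variable (hp0 : 0 ≤ p) (hp1 : p ≤ 1)
include hp0 hp1

lemma prob_nonneg : 0 ≤ prob N p x S := by
  rw [prob_eq_toReal hp0 hp1]
  exact ENNReal.toReal_nonneg

lemma prob_of_boundary (hx : x = 0 ∨ x = N) (hS : S []) : prob N p x S = 1 := by
  rw [prob_eq_toReal hp0 hp1, eprob_of_not_interior (by omega),
    Set.indicator_of_mem (s := {w | IsExitPath N x w ∧ S w}) ⟨isExitPath_nil.mpr hx, hS⟩,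
    ewt_nil, ENNReal.toReal_one]

lemma prob_of_not_interior (hx : ¬ (0 < x ∧ x < N)) (hS : ¬ S []) : prob N p x S = 0 := by
  rw [prob_eq_toReal hp0 hp1, eprob_of_not_interior hx, Set.indicator_of_notMem (fun h => hS h.2),
    ENNReal.toReal_zero]

lemma prob_first_step (hx : 0 < x ∧ x < N) :
    prob N p x S = p * prob N p (x + 1) (fun w => S (true :: w))
      + (1 - p) * prob N p (x - 1) (fun w => S (false :: w)) := by
  simp only [prob_eq_toReal hp0 hp1]
  rw [eprob_first_step hx, ENNReal.toReal_add
      (ENNReal.mul_ne_top ENNReal.ofReal_ne_top (eprob_ne_top hp0 hp1))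
      (ENNReal.mul_ne_top ENNReal.ofReal_ne_top (eprob_ne_top hp0 hp1)),
    ENNReal.toReal_mul, ENNReal.toReal_mul, ENNReal.toReal_ofReal hp0,
    ENNReal.toReal_ofReal (sub_nonneg.mpr hp1)]

lemma prob_add_prob_not :
    prob N p x S + prob N p x (fun w => ¬ S w) = prob N p x (fun _ => True) := by
  simp only [prob_eq_toReal hp0 hp1, ← eprob_add_eprob_not (S := S)]
  exact (ENNReal.toReal_add (eprob_ne_top hp0 hp1) (eprob_ne_top hp0 hp1)).symm

lemma isHarmonicOn_prob {E : ℤ → List Bool → Prop} {a b : ℤ} (ha : 0 ≤ a) (hb : b ≤ N)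
    (hE : ∀ z, a < z → z < b → ∀ s w, E z (s :: w) ↔ E (z + if s then 1 else -1) w) :
    IsHarmonicOn p (fun z => prob N p z (E z)) a b := by
  intro z hz₁ hz₂
  dsimp only
  rw [prob_first_step hp0 hp1 ⟨by omega, by omega⟩]
  congr 2 <;> refine prob_congr fun w _ => ?_
  · simpa using hE z hz₁ hz₂ true w
  · simpa [← sub_eq_add_neg] using hE z hz₁ hz₂ false w

end

variable (hp0 : 0 < p) (hp1 : p < 1) (hx : 0 ≤ x ∧ x ≤ N)
include hp0 hp1 hx

/-- The walk leaves `(0, N)` almost surely. -/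
lemma prob_true : prob N p x (fun _ => True) = 1 :=
  (isHarmonicOn_prob (E := fun _ _ => True) hp0.le hp1.le le_rfl le_rfl
    (fun _ _ _ _ _ => Iff.rfl)).eqOn_of_eq_of_eq
    hp0 hp1 (isHarmonicOn_const 1) (prob_of_boundary hp0.le hp1.le (Or.inl rfl) trivial)
    (prob_of_boundary hp0.le hp1.le (Or.inr rfl) trivial) hx

lemma prob_not : prob N p x (fun w => ¬ S w) = 1 - prob N p x S := by
  rw [← prob_true hp0 hp1 hx, ← prob_add_prob_not hp0.le hp1.le, add_sub_cancel_left]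

lemma prob_le_one : prob N p x S ≤ 1 := by
  have h := prob_nonneg hp0.le hp1.le (N := N) (x := x) (S := fun w => ¬ S w)
  rw [prob_not hp0 hp1 hx] at h
  linarith

end Prob

section LocalTime

variable {N : ℕ} {p : ℝ} {x y : ℤ} {w : List Bool}

lemma localTime_nil (x y : ℤ) : localTime x y [] = if x = y then 1 else 0 := by
  by_cases h : x = y <;> simp [localTime, h]

lemma localTime_cons (x y : ℤ) (b : Bool) (w : List Bool) :
    localTime x y (b :: w) =
      (if x = y then 1 else 0) + localTime (x + if b then 1 else -1) y w := by
  simp only [localTime, Finset.card_filter, List.length_cons,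
    Finset.sum_range_succ' _ (w.length + 1),
    List.take_succ_cons, walkPos_cons, List.take_zero, walkPos_nil]
  exact add_comm _ _

lemma hitsBefore_iff_localTime_pos (hxy : x ≠ y) (hy : 0 < y ∧ y < N) (hw : IsExitPath N x w) :
    hitsBefore x y w ↔ 0 < localTime x y w := by
  simp only [hitsBefore, localTime, Finset.card_pos, Finset.Nonempty, Finset.mem_filter,
    Finset.mem_range]
  constructor
  · rintro ⟨k, -, hk, hpos⟩
    exact ⟨k, by omega, hpos⟩
  · rintro ⟨k, hk, hpos⟩
    refine ⟨k, Nat.one_le_iff_ne_zero.mpr ?_, lt_of_le_of_ne (by omega) ?_, hpos⟩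
    · rintro rfl
      exact hxy (by simpa using hpos)
    · rintro rfl
      rw [List.take_length] at hpos
      rcases hw.2 with h | h <;> omega

variable (hp0 : 0 ≤ p) (hp1 : p ≤ 1)
include hp0 hp1

lemma isHarmonicOn_prob_localTime (P : ℕ → Prop) {a b : ℤ} (ha : 0 ≤ a) (hb : b ≤ N)
    (hy : y ∉ Set.Ioo a b) :
    IsHarmonicOn p (fun z => prob N p z (fun w => P (localTime z y w))) a b :=
  isHarmonicOn_prob hp0 hp1 ha hb fun z hz₁ hz₂ s w => by
    rw [localTime_cons, if_neg (by rintro rfl; exact hy ⟨hz₁, hz₂⟩), zero_add]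

lemma prob_localTime_of_not_interior (P : ℕ → Prop) (hP : ¬ P 0) {z : ℤ}
    (hz : ¬ (0 < z ∧ z < N)) (hzy : z ≠ y) :
    prob N p z (fun w => P (localTime z y w)) = 0 :=
  prob_of_not_interior hp0 hp1 hz (by simpa [localTime_nil, hzy] using hP)

end LocalTime

/-- `P_z(G(y) ≥ 1)`; time `0` counts as a visit. -/
noncomputable def visitProb (N : ℕ) (p : ℝ) (y z : ℤ) : ℝ :=
  prob N p z (fun w => 0 < localTime z y w)

noncomputable def oddVisitProb (N : ℕ) (p : ℝ) (y z : ℤ) : ℝ :=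
  prob N p z (fun w => localTime z y w % 2 = 1)

/-- `P_y(T_y < τ_N)`. -/
noncomputable def returnProb (N : ℕ) (p : ℝ) (y : ℤ) : ℝ :=
  prob N p y (fun w => 1 < localTime y y w)

section Visits

variable {N : ℕ} {p : ℝ} {y z : ℤ} (hp0 : 0 < p) (hp1 : p < 1) (hy : 0 < y ∧ y < N)
include hp0 hp1 hy

omit hy in
lemma isHarmonicOn_visitProb {a b : ℤ} (ha : 0 ≤ a) (hb : b ≤ N)
    (hya : y ∉ Set.Ioo a b) :
    IsHarmonicOn p (visitProb N p y) a b :=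
  isHarmonicOn_prob_localTime hp0.le hp1.le (0 < ·) ha hb hya

omit hy in
lemma isHarmonicOn_oddVisitProb {a b : ℤ} (ha : 0 ≤ a) (hb : b ≤ N)
    (hya : y ∉ Set.Ioo a b) :
    IsHarmonicOn p (oddVisitProb N p y) a b :=
  isHarmonicOn_prob_localTime hp0.le hp1.le (· % 2 = 1) ha hb hya

lemma visitProb_self : visitProb N p y y = 1 :=
  (prob_congr fun w _ => iff_true_intro (Finset.card_pos.mpr ⟨0, by simp⟩)).trans
    (prob_true hp0 hp1 ⟨hy.1.le, hy.2.le⟩)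

lemma visitProb_of_not_interior (hz : z = 0 ∨ z = N) : visitProb N p y z = 0 :=
  prob_localTime_of_not_interior hp0.le hp1.le (0 < ·) (lt_irrefl 0) (by omega) (by omega)

lemma visitProb_eq_of_le (hz : 0 ≤ z ∧ z ≤ y) :
    visitProb N p y z = scale ((1 - p) / p) z / scale ((1 - p) / p) y := by
  have hsy : scale ((1 - p) / p) y ≠ 0 :=
    (scale_zero _ ▸ scale_lt_scale (div_pos (by linarith) hp0) le_rfl hy.1).ne'
  have h := (isHarmonicOn_visitProb hp0 hp1 le_rfl hy.2.le
      (fun h => lt_irrefl y h.2)).eqOn_of_eq_of_eq hp0 hp1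
    ((isHarmonicOn_scale hp0 le_rfl).const_mul (scale ((1 - p) / p) y)⁻¹)
    (by simpa [scale_zero] using visitProb_of_not_interior hp0 hp1 hy (Or.inl rfl))
    (by simpa [hsy] using visitProb_self hp0 hp1 hy) hz
  simpa [div_eq_inv_mul] using h

lemma visitProb_eq_of_ge (hz : y ≤ z ∧ z ≤ N) :
    visitProb N p y z = (scale ((1 - p) / p) N - scale ((1 - p) / p) z) /
      (scale ((1 - p) / p) N - scale ((1 - p) / p) y) := by
  have hs : scale ((1 - p) / p) N - scale ((1 - p) / p) y ≠ 0 :=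
    (sub_pos.mpr (scale_lt_scale (div_pos (by linarith) hp0) hy.1.le hy.2)).ne'
  have h := (isHarmonicOn_visitProb hp0 hp1 hy.1.le le_rfl
      (fun h => lt_irrefl y h.1)).eqOn_of_eq_of_eq hp0 hp1
    (((isHarmonicOn_const (scale ((1 - p) / p) N)).sub
      (isHarmonicOn_scale hp0 hy.1.le)).const_mul
      (scale ((1 - p) / p) N - scale ((1 - p) / p) y)⁻¹)
    (by simpa [hs] using visitProb_self hp0 hp1 hy)
    (by simpa using visitProb_of_not_interior hp0 hp1 hy (Or.inr rfl)) hz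
  simpa [div_eq_inv_mul] using h

lemma visitProb_pos (hz : 0 < z ∧ z < N) : 0 < visitProb N p y z := by
  have hρ : 0 < (1 - p) / p := div_pos (by linarith) hp0
  rcases le_total z y with hzy | hyz
  · rw [visitProb_eq_of_le hp0 hp1 hy ⟨hz.1.le, hzy⟩]
    exact div_pos (scale_zero ((1 - p) / p) ▸ scale_lt_scale hρ le_rfl hz.1)
      (scale_zero ((1 - p) / p) ▸ scale_lt_scale hρ le_rfl hy.1)
  · rw [visitProb_eq_of_ge hp0 hp1 hy ⟨hyz, hz.2.le⟩]
    exact div_pos (sub_pos.mpr (scale_lt_scale hρ (by omega) hz.2))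
      (sub_pos.mpr (scale_lt_scale hρ hy.1.le hy.2))

/-- Away from `y` both functions are harmonic, and they agree at `0`, `y` and `N`. -/
lemma oddVisitProb_eq_mul_visitProb (hz : 0 ≤ z ∧ z ≤ N) :
    oddVisitProb N p y z = oddVisitProb N p y y * visitProb N p y z := by
  have hodd₀ : oddVisitProb N p y 0 = 0 :=
    prob_localTime_of_not_interior hp0.le hp1.le (· % 2 = 1) (by simp) (by omega) (by omega)
  have hoddN : oddVisitProb N p y N = 0 :=
    prob_localTime_of_not_interior hp0.le hp1.le (· % 2 = 1) (by simp) (by omega) (by omega)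
  have hvisity := visitProb_self hp0 hp1 hy
  have hleft : y ∉ Set.Ioo 0 y := fun h => lt_irrefl y h.2
  have hright : y ∉ Set.Ioo y N := fun h => lt_irrefl y h.1
  rcases le_total z y with hzy | hyz
  · exact (isHarmonicOn_oddVisitProb hp0 hp1 le_rfl hy.2.le hleft).eqOn_of_eq_of_eq hp0 hp1
      ((isHarmonicOn_visitProb hp0 hp1 le_rfl hy.2.le hleft).const_mul _)
      (by simp [hodd₀, visitProb_of_not_interior hp0 hp1 hy (Or.inl rfl)]) (by simp [hvisity])
      ⟨hz.1, hzy⟩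
  · exact (isHarmonicOn_oddVisitProb hp0 hp1 hy.1.le le_rfl hright).eqOn_of_eq_of_eq hp0 hp1
      ((isHarmonicOn_visitProb hp0 hp1 hy.1.le le_rfl hright).const_mul _)
      (by simp [hvisity]) (by simp [hoddN, visitProb_of_not_interior hp0 hp1 hy (Or.inr rfl)])
      ⟨hyz, hz.2⟩

lemma returnProb_eq :
    returnProb N p y = p * visitProb N p y (y + 1) + (1 - p) * visitProb N p y (y - 1) := by
  rw [returnProb, prob_first_step hp0.le hp1.le hy]
  congr 2 <;> refine prob_congr fun w _ => ?_ <;> simp [localTime_cons, sub_eq_add_neg]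

/-- The first step from `y` flips the parity of `G(y)`, so `φ = P_y(G(y) odd)` solves
`φ = 1 - φ r`. -/
lemma oddVisitProb_self : oddVisitProb N p y y = 1 / (1 + returnProb N p y) := by
  have hr : 0 ≤ returnProb N p y := prob_nonneg hp0.le hp1.le
  have hstep : oddVisitProb N p y y =
      p * (1 - oddVisitProb N p y (y + 1)) + (1 - p) * (1 - oddVisitProb N p y (y - 1)) := by
    rw [oddVisitProb, prob_first_step hp0.le hp1.le hy, oddVisitProb, oddVisitProb,
      ← prob_not hp0 hp1 (by omega), ← prob_not hp0 hp1 (by omega)]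
    congr 2 <;> refine prob_congr fun w _ => ?_ <;> simp [localTime_cons, sub_eq_add_neg] <;> omega
  rw [oddVisitProb_eq_mul_visitProb (z := y + 1) hp0 hp1 hy (by omega),
    oddVisitProb_eq_mul_visitProb (z := y - 1) hp0 hp1 hy (by omega)] at hstep
  rw [eq_div_iff (by linarith), returnProb_eq hp0 hp1 hy]
  linear_combination hstep

lemma prob_odd_and_hitsBefore_div_prob_hitsBefore {x : ℤ} (hx : 0 < x ∧ x < N) (hxy : x ≠ y) :
    prob N p x (fun w => localTime x y w % 2 = 1 ∧ hitsBefore x y w) /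
        prob N p x (fun w => hitsBefore x y w) = 1 / (1 + returnProb N p y) := by
  have hodd : prob N p x (fun w => localTime x y w % 2 = 1 ∧ hitsBefore x y w) =
      oddVisitProb N p y x := prob_congr fun w hw => by
    rw [hitsBefore_iff_localTime_pos hxy hy hw]
    omega
  have hhits : prob N p x (fun w => hitsBefore x y w) = visitProb N p y x :=
    prob_congr fun w hw => hitsBefore_iff_localTime_pos hxy hy hw
  rw [hodd, hhits, oddVisitProb_eq_mul_visitProb hp0 hp1 hy (by omega),
    mul_div_cancel_right₀ _ (visitProb_pos hp0 hp1 hy hx).ne', oddVisitProb_self hp0 hp1 hy]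

end Visits

section Escape

variable {N : ℕ} {p : ℝ} {y : ℤ} (hp : 1 / 2 ≤ p) (hp1 : p < 1) (hy : 0 < y ∧ y < N)
include hp hp1 hy

lemma one_sub_visitProb_sub_one_le : 1 - visitProb N p y (y - 1) ≤ (p / (1 - p)) ^ N / y := by
  have hp0 : 0 < p := by linarith
  have hρ0 : 0 < (1 - p) / p := div_pos (by linarith) hp0
  have hρ1 : (1 - p) / p ≤ 1 := (div_le_one hp0).mpr (by linarith)
  have hsy := scale_add_one ((1 - p) / p) (show 0 ≤ y - 1 by omega)
  rw [sub_add_cancel] at hsy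
  have hpos := scale_zero ((1 - p) / p) ▸ scale_lt_scale hρ0 le_rfl hy.1
  rw [visitProb_eq_of_le hp0 hp1 hy ⟨by omega, by omega⟩]
  calc 1 - scale ((1 - p) / p) (y - 1) / scale ((1 - p) / p) y
      = ((1 - p) / p) ^ (y - 1).toNat *
          (1 / (scale ((1 - p) / p) y - scale ((1 - p) / p) 0)) := by
        rw [scale_zero, sub_zero, one_sub_div hpos.ne', hsy]
        ring
    _ ≤ 1 * (((1 - p) / p)⁻¹ ^ N / (y - (0 : ℤ))) :=
        mul_le_mul (pow_le_one₀ hρ0.le hρ1)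
          (one_div_scale_sub_scale_le hρ0 hρ1 le_rfl hy.1 hy.2.le)
          (by positivity) zero_le_one
    _ = (p / (1 - p)) ^ N / y := by simp

lemma one_sub_visitProb_add_one_le :
    1 - visitProb N p y (y + 1) ≤ (p / (1 - p)) ^ N / (N - y) := by
  have hp0 : 0 < p := by linarith
  have hρ0 : 0 < (1 - p) / p := div_pos (by linarith) hp0
  have hρ1 : (1 - p) / p ≤ 1 := (div_le_one hp0).mpr (by linarith)
  have hsy := scale_add_one ((1 - p) / p) hy.1.le
  have hpos := sub_pos.mpr (scale_lt_scale hρ0 hy.1.le hy.2)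
  rw [visitProb_eq_of_ge hp0 hp1 hy ⟨by omega, by omega⟩]
  calc 1 - (scale ((1 - p) / p) N - scale ((1 - p) / p) (y + 1)) /
        (scale ((1 - p) / p) N - scale ((1 - p) / p) y)
      = ((1 - p) / p) ^ y.toNat * (1 / (scale ((1 - p) / p) N - scale ((1 - p) / p) y)) := by
        rw [one_sub_div hpos.ne', hsy]
        ring
    _ ≤ 1 * (((1 - p) / p)⁻¹ ^ N / ((N : ℤ) - y)) :=
        mul_le_mul (pow_le_one₀ hρ0.le hρ1)
          (one_div_scale_sub_scale_le hρ0 hρ1 hy.1.le hy.2 le_rfl)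
          (by positivity) zero_le_one
    _ = (p / (1 - p)) ^ N / (N - y) := by simp

lemma one_sub_returnProb_le :
    1 - returnProb N p y ≤ (p / (1 - p)) ^ N * ((y : ℝ)⁻¹ + ((N : ℝ) - y)⁻¹) := by
  have hp0 : 0 < p := by linarith
  have hup : visitProb N p y (y + 1) ≤ 1 := prob_le_one hp0 hp1 (by omega)
  have hdown : visitProb N p y (y - 1) ≤ 1 := prob_le_one hp0 hp1 (by omega)
  have hup' := one_sub_visitProb_add_one_le hp hp1 hy
  have hdown' := one_sub_visitProb_sub_one_le hp hp1 hy
  have hpup : p * (1 - visitProb N p y (y + 1)) ≤ 1 - visitProb N p y (y + 1) :=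
    mul_le_of_le_one_left (sub_nonneg.mpr hup) hp1.le
  have hpdown : (1 - p) * (1 - visitProb N p y (y - 1)) ≤ 1 - visitProb N p y (y - 1) :=
    mul_le_of_le_one_left (sub_nonneg.mpr hdown) (by linarith)
  rw [returnProb_eq hp0 hp1 hy, mul_add, ← div_eq_mul_inv, ← div_eq_mul_inv]
  linarith

end Escape

lemma pow_le_exp_mul_sub_one {t : ℝ} (ht : 0 ≤ t) (n : ℕ) :
    t ^ n ≤ Real.exp (n * (t - 1)) := by
  rw [Real.exp_nat_mul]
  exact pow_le_pow_left₀ ht (by linarith [Real.add_one_le_exp (t - 1)]) n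

lemma eventually_floor_mul_mem_Ioo {α : ℝ} (h0 : 0 < α) (h1 : α < 1) :
    ∀ᶠ N : ℕ in atTop, 0 < ⌊α * N⌋ ∧ ⌊α * N⌋ < N := by
  filter_upwards [(tendsto_natCast_atTop_atTop.const_mul_atTop h0).eventually_ge_atTop 1,
    eventually_gt_atTop 0] with N hαN hN
  refine ⟨Int.floor_pos.mpr hαN, Int.floor_lt.mpr ?_⟩
  push_cast
  exact mul_lt_of_lt_one_left (Nat.cast_pos.mpr hN) h1

lemma eventually_floor_mul_ne {α β : ℝ} (h : α ≠ β) :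
    ∀ᶠ N : ℕ in atTop, ⌊α * N⌋ ≠ ⌊β * N⌋ := by
  filter_upwards [(tendsto_natCast_atTop_atTop.const_mul_atTop (abs_pos.mpr (sub_ne_zero.mpr h))
    ).eventually_ge_atTop 1] with N hN heq
  have := Int.abs_sub_lt_one_of_floor_eq_floor heq
  rw [← sub_mul, abs_mul, Nat.abs_cast] at this
  linarith

lemma eventually_half_add_div_mem_Ico {c : ℝ} (hc : 0 ≤ c) :
    ∀ᶠ N : ℕ in atTop, 1 / 2 + c / N ∈ Set.Ico (1 / 2 : ℝ) 1 := by
  filter_upwards [(tendsto_const_div_atTop_nhds_zero_nat c).eventually_lt_const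
    (show (0 : ℝ) < 1 / 2 by norm_num)] with N hN
  exact ⟨le_add_of_nonneg_right (by positivity), by linarith⟩

lemma half_add_div_odds_pow_le_exp {c : ℝ} {N : ℕ} (hN : 0 < N) (hp : 0 ≤ 1 / 2 + c / N)
    (hp1 : 1 / 2 + c / N < 1) :
    ((1 / 2 + c / N) / (1 - (1 / 2 + c / N))) ^ N ≤ Real.exp (2 * c / (1 - (1 / 2 + c / N))) := by
  have hq : 0 < 1 - (1 / 2 + c / N) := by linarith
  have hdiff : (N : ℝ) * ((1 / 2 + c / N) - (1 - (1 / 2 + c / N))) = 2 * c := by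
    field_simp
    ring
  refine (pow_le_exp_mul_sub_one (div_nonneg hp hq.le) N).trans_eq ?_
  rw [div_sub_one hq.ne', ← mul_div_assoc, hdiff]

lemma tendsto_returnProb_weaklyAsymmetric {c β : ℝ} (hc : 0 < c) (hβ0 : 0 < β)
    (hβ1 : β < 1) :
    Tendsto (fun N : ℕ => returnProb N (1 / 2 + c / N) ⌊β * N⌋) atTop (𝓝 1) := by
  have hp : Tendsto (fun N : ℕ => 1 / 2 + c / (N : ℝ)) atTop (𝓝 (1 / 2)) := by
    simpa using (tendsto_const_div_atTop_nhds_zero_nat c).const_add (1 / 2 : ℝ)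
  have hy : Tendsto (fun N : ℕ => (⌊β * N⌋ : ℝ)) atTop atTop :=
    tendsto_atTop_mono (fun N => (Int.sub_one_lt_floor _).le)
      (tendsto_atTop_add_const_right _ (-1) (tendsto_natCast_atTop_atTop.const_mul_atTop hβ0))
  have hNy : Tendsto (fun N : ℕ => (N : ℝ) - ⌊β * N⌋) atTop atTop :=
    tendsto_atTop_mono (fun N => by linarith [Int.floor_le (β * N), one_sub_mul β (N : ℝ)])
      (tendsto_natCast_atTop_atTop.const_mul_atTop (sub_pos.mpr hβ1))
  have hbound : Tendsto (fun N : ℕ => Real.exp (2 * c / (1 - (1 / 2 + c / N))) *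
      ((⌊β * N⌋ : ℝ)⁻¹ + ((N : ℝ) - ⌊β * N⌋)⁻¹)) atTop (𝓝 0) := by
    simpa using ((Real.continuous_exp.tendsto _).comp (tendsto_const_nhds.div
      (tendsto_const_nhds.sub hp) (by norm_num))).mul
      (hy.inv_tendsto_atTop.add hNy.inv_tendsto_atTop)
  refine tendsto_of_tendsto_of_tendsto_of_le_of_le' (by simpa using hbound.const_sub 1)
    tendsto_const_nhds ?_ ?_
  · filter_upwards [eventually_half_add_div_mem_Ico hc.le, eventually_floor_mul_mem_Ioo hβ0 hβ1,
      eventually_gt_atTop 0] with N ⟨hp, hp1⟩ hyN hN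
    have := one_sub_returnProb_le hp hp1 hyN
    have := mul_le_mul_of_nonneg_right (half_add_div_odds_pow_le_exp hN (by linarith) hp1)
      (add_nonneg (inv_nonneg.mpr (by exact_mod_cast hyN.1.le : (0 : ℝ) ≤ ⌊β * N⌋))
        (inv_nonneg.mpr (sub_nonneg.mpr (by exact_mod_cast hyN.2.le : (⌊β * N⌋ : ℝ) ≤ N))))
    linarith
  · filter_upwards [eventually_half_add_div_mem_Ico hc.le, eventually_floor_mul_mem_Ioo hβ0 hβ1]
      with N ⟨hp, hp1⟩ hyN
    exact prob_le_one (by linarith) hp1 ⟨hyN.1.le, hyN.2.le⟩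

/-- Proposition 4.3 (weakly asymmetric case): for `p_N = 1/2 + c/N`, the conditional
probability that `⌊βN⌋` is visited an odd number of times, given that it is visited
before exit, tends to `1/2`. -/
theorem odd_parity_conditional_weakly_asymmetric (c α β : ℝ) (hc : 0 < c)
    (hα0 : 0 < α) (hα1 : α < 1) (hβ0 : 0 < β) (hβ1 : β < 1) (hαβ : α ≠ β) :
    Tendsto (fun N : ℕ =>
        prob N (1/2 + c / (N : ℝ)) ⌊α * (N : ℝ)⌋
            (fun w => localTime ⌊α * (N : ℝ)⌋ ⌊β * (N : ℝ)⌋ w % 2 = 1 ∧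
              hitsBefore ⌊α * (N : ℝ)⌋ ⌊β * (N : ℝ)⌋ w) /
          prob N (1/2 + c / (N : ℝ)) ⌊α * (N : ℝ)⌋
            (fun w => hitsBefore ⌊α * (N : ℝ)⌋ ⌊β * (N : ℝ)⌋ w))
      atTop (𝓝 (1/2)) := by
  have hlim : Tendsto (fun N : ℕ => 1 / (1 + returnProb N (1 / 2 + c / N) ⌊β * N⌋)) atTop
      (𝓝 (1 / 2)) := by
    simpa [one_add_one_eq_two] using
      ((tendsto_returnProb_weaklyAsymmetric hc hβ0 hβ1).const_add 1).inv₀ (by norm_num)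
  refine hlim.congr' ?_
  filter_upwards [eventually_half_add_div_mem_Ico hc.le, eventually_floor_mul_mem_Ioo hα0 hα1,
    eventually_floor_mul_mem_Ioo hβ0 hβ1, eventually_floor_mul_ne hαβ]
    with N ⟨hp, hp1⟩ hx hy hxy
  exact (prob_odd_and_hitsBefore_div_prob_hitsBefore (by linarith) hp1 hy hx hxy).symm
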